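/- Let V be a finite-dimensional vector space over ℂ with a decomposition V = V₁ ⊕ ⋯ ⊕ V_d into subspaces that are pairwise orthogonal with respect to a symplectic form ω on V. Let λ₁, …, λ_d be pairwise distinct nonzero complex numbers and let T be the linear map acting on V_i by multiplication by λ_i. If v = v₁ + ⋯ + v_d with all v_i ≠ 0, then the T-invariant subspace generated by v is an isotropic subspace of dimension d, provided ω(v_i, v_i) = 0 for each i. -/
import Mathlib


/-- Let `(V, ω)` be a finite-dimensional symplectic vector space over `ℂ` decomposed
as an internal direct sum of pairwise symplectically orthogonal subspaces `V i`, and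
let `T` act on `V i` by multiplication by pairwise distinct nonzero scalars `lam i`.
If `v = ∑ i, w i` with each `w i ∈ V i` nonzero and `ω (w i) (w i) = 0`, then the
`T`-invariant subspace generated by `v` (the span of `{T^k v}`) is isotropic of
dimension `d`. -/
theorem orbit_span_isotropic_of_eigencomponents
    (V : Type*) [AddCommGroup V] [Module ℂ V] [FiniteDimensional ℂ V]
    (ω : LinearMap.BilinForm ℂ V) (halt : ω.IsAlt) (hnd : ω.Nondegenerate)
    (d : ℕ) (Vi : Fin d → Submodule ℂ V) (hV : DirectSum.IsInternal Vi)
    (horth : ∀ i j, i ≠ j → ∀ x ∈ Vi i, ∀ y ∈ Vi j, ω x y = 0)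
    (lam : Fin d → ℂ) (hlam : Function.Injective lam) (hlam0 : ∀ i, lam i ≠ 0)
    (T : V →ₗ[ℂ] V) (hT : ∀ i, ∀ x ∈ Vi i, T x = lam i • x)
    (w : Fin d → V) (hw : ∀ i, w i ∈ Vi i) (hw0 : ∀ i, w i ≠ 0)
    (hwiso : ∀ i, ω (w i) (w i) = 0)
    (v : V) (hv : v = ∑ i, w i) :
    Module.finrank ℂ (Submodule.span ℂ (Set.range fun n : ℕ => (T ^ n) v)) = d ∧
      ∀ x ∈ Submodule.span ℂ (Set.range fun n : ℕ => (T ^ n) v),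
        ∀ y ∈ Submodule.span ℂ (Set.range fun n : ℕ => (T ^ n) v), ω x y = 0 := by
  have hupow : ∀ n : ℕ, (T ^ n) v = ∑ i, lam i ^ n • w i := by
    intro n
    induction n with
    | zero => simp [hv]
    | succ n ih =>
      rw [pow_succ', Module.End.mul_apply, ih, map_sum]
      refine Finset.sum_congr rfl fun i _ => ?_
      rw [map_smul, hT i (w i) (hw i), smul_smul, pow_succ]
  set S := Submodule.span ℂ (Set.range fun n : ℕ => (T ^ n) v) with hS
  set W := Submodule.span ℂ (Set.range w) with hW
  have h1 : S ≤ W := by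
    rw [hS, Submodule.span_le]
    rintro _ ⟨n, rfl⟩
    show (T ^ n) v ∈ (W : Set V)
    rw [hupow]
    exact Submodule.sum_mem _ fun i _ =>
      Submodule.smul_mem _ _ (Submodule.subset_span ⟨i, rfl⟩)
  set A : Matrix (Fin d) (Fin d) ℂ := (Matrix.vandermonde lam).transpose with hA
  have hdet : IsUnit A.det := by
    rw [hA, Matrix.det_transpose, Matrix.det_vandermonde, isUnit_iff_ne_zero]
    refine Finset.prod_ne_zero_iff.mpr fun i _ => Finset.prod_ne_zero_iff.mpr fun j hj => ?_
    have : i ≠ j := (Finset.mem_Ioi.mp hj).ne'.symm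
    exact sub_ne_zero.mpr fun h => this (hlam h).symm
  have hinv : A⁻¹ * A = 1 := Matrix.nonsing_inv_mul A hdet
  have h2 : W ≤ S := by
    rw [hW, Submodule.span_le]
    rintro _ ⟨j, rfl⟩
    have key : ∑ n : Fin d, (A⁻¹) j n • (T ^ (n : ℕ)) v = w j := by
      calc ∑ n : Fin d, (A⁻¹) j n • (T ^ (n : ℕ)) v
          = ∑ n : Fin d, ∑ i, ((A⁻¹) j n * lam i ^ (n : ℕ)) • w i := by
            simp [hupow, Finset.smul_sum, smul_smul]
        _ = ∑ i, (∑ n : Fin d, (A⁻¹) j n * A n i) • w i := by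
            rw [Finset.sum_comm]
            simp [Finset.sum_smul, hA, Matrix.vandermonde]
        _ = w j := by
            simp_rw [← Matrix.mul_apply, hinv]
            simp [Matrix.one_apply]
    rw [← key]
    exact Submodule.sum_mem _ fun n _ =>
      Submodule.smul_mem _ _ (Submodule.subset_span ⟨(n : ℕ), rfl⟩)
  have hSW : S = W := le_antisymm h1 h2
  have hli : LinearIndependent ℂ w :=
    iSupIndep.linearIndependent Vi hV.submodule_iSupIndep hw hw0
  have hwij : ∀ i j, ω (w i) (w j) = 0 := by
    intro i j
    by_cases h : i = j
    · subst h; exact hwiso i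
    · exact horth i j h _ (hw i) _ (hw j)
  have hrow : ∀ i, ∀ y ∈ W, ω (w i) y = 0 := by
    intro i y hy
    induction hy using Submodule.span_induction with
    | mem z hz => obtain ⟨j, rfl⟩ := hz; exact hwij i j
    | zero => simp
    | add a b _ _ ha hb => simp [ha, hb]
    | smul c a _ ha => simp [ha]
  have key2 : ∀ x ∈ W, ∀ y ∈ W, ω x y = 0 := by
    intro x hx y hy
    induction hx using Submodule.span_induction with
    | mem z hz => obtain ⟨i, rfl⟩ := hz; exact hrow i y hy
    | zero => simp
    | add a b _ _ ha hb => simp [ha, hb]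
    | smul c a _ ha => simp [ha]
  constructor
  · rw [hSW, hW]
    simpa using finrank_span_eq_card hli
  · intro x hx y hy
    exact key2 x (hSW ▸ hx) y (hSW ▸ hy)
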